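/- The group of ℝ-linear isometric equivalences of ℍ with determinant 1 (under composition) is isomorphic, as a group, to the quotient of Sp(1) × Sp(1) by the two-element central subgroup generated by (−1, −1); an isomorphism is induced by (p, q) ↦ (x ↦ p x q⁻¹). -/

import Mathlib

open Metric Quaternion

/-- `SO(4)`, realized as the group of `ℝ`-linear isometric equivalences of `ℍ`
with determinant `1`. -/
noncomputable def SO4 : Subgroup (ℍ[ℝ] ≃ₗᵢ[ℝ] ℍ[ℝ]) where
  carrier := {f | LinearMap.det (f.toLinearEquiv : ℍ[ℝ] →ₗ[ℝ] ℍ[ℝ]) = 1}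
  one_mem' := by
    have h : (((1 : ℍ[ℝ] ≃ₗᵢ[ℝ] ℍ[ℝ]).toLinearEquiv : ℍ[ℝ] →ₗ[ℝ] ℍ[ℝ]))
        = LinearMap.id := rfl
    show LinearMap.det _ = 1
    rw [h, LinearMap.det_id]
  mul_mem' := by
    intro f g hf hg
    have h : ((f * g).toLinearEquiv : ℍ[ℝ] →ₗ[ℝ] ℍ[ℝ])
        = (f.toLinearEquiv : ℍ[ℝ] →ₗ[ℝ] ℍ[ℝ]) ∘ₗ (g.toLinearEquiv : ℍ[ℝ] →ₗ[ℝ] ℍ[ℝ]) := rfl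
    simp only [Set.mem_setOf_eq] at *
    rw [h, LinearMap.det_comp, hf, hg, mul_one]
  inv_mem' := by
    intro f hf
    simp only [Set.mem_setOf_eq] at *
    have h : ((f⁻¹).toLinearEquiv : ℍ[ℝ] →ₗ[ℝ] ℍ[ℝ]) ∘ₗ (f.toLinearEquiv : ℍ[ℝ] →ₗ[ℝ] ℍ[ℝ])
        = LinearMap.id := LinearMap.ext fun x => f.symm_apply_apply x
    have := congrArg LinearMap.det h
    rw [LinearMap.det_comp, hf, mul_one, LinearMap.det_id] at this
    exact this

/-- `-1` as a unit quaternion. -/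
noncomputable def negOneSp1 : sphere (0 : ℍ[ℝ]) 1 := -1

instance : (Subgroup.zpowers ((negOneSp1, negOneSp1) :
    sphere (0 : ℍ[ℝ]) 1 × sphere (0 : ℍ[ℝ]) 1)).Normal := by
  constructor
  intro x hx g
  obtain ⟨k, rfl⟩ := Subgroup.mem_zpowers_iff.mp hx
  have hc : Commute ((negOneSp1, negOneSp1) : sphere (0 : ℍ[ℝ]) 1 × sphere (0 : ℍ[ℝ]) 1) g := by
    apply Prod.ext <;>
    · apply Subtype.ext
      show ((-1 : ℍ[ℝ]) * _ : ℍ[ℝ]) = _ * (-1 : ℍ[ℝ])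
      simp
  have hck := (hc.zpow_left k).eq
  have h2 : g * (negOneSp1, negOneSp1) ^ k * g⁻¹ = (negOneSp1, negOneSp1) ^ k := by
    rw [← hck]
    group
  rw [h2]
  exact Subgroup.zpow_mem _ (Subgroup.mem_zpowers _) k


noncomputable def qb : Module.Basis (Fin 4) ℝ ℍ[ℝ] := QuaternionAlgebra.basisOneIJK _ _ _

lemma qb_repr (x : ℍ[ℝ]) : ⇑(qb.repr x) = ![x.re, x.imI, x.imJ, x.imK] :=
  QuaternionAlgebra.coe_basisOneIJK_repr _ _ _ x

def qmk (a b c d : ℝ) : ℍ[ℝ] := ⟨a, b, c, d⟩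

@[simp] lemma qmk_re (a b c d : ℝ) : (qmk a b c d).re = a := rfl
@[simp] lemma qmk_imI (a b c d : ℝ) : (qmk a b c d).imI = b := rfl
@[simp] lemma qmk_imJ (a b c d : ℝ) : (qmk a b c d).imJ = c := rfl
@[simp] lemma qmk_imK (a b c d : ℝ) : (qmk a b c d).imK = d := rfl

lemma qb_apply : ∀ j, qb j = ![qmk 1 0 0 0, qmk 0 1 0 0, qmk 0 0 1 0, qmk 0 0 0 1] j := by
  intro j
  rw [Module.Basis.apply_eq_iff]
  ext i
  have := qb_repr (![qmk 1 0 0 0, qmk 0 1 0 0, qmk 0 0 1 0, qmk 0 0 0 1] j)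
  fin_cases j <;> fin_cases i <;>
    simp_all [Finsupp.single_apply]

lemma detM (a : ℍ[ℝ]) (f : ℍ[ℝ] →ₗ[ℝ] ℍ[ℝ])
    (M : Matrix (Fin 4) (Fin 4) ℝ) (hM : ∀ i j, qb.repr (f (qb j)) i = M i j) :
    LinearMap.det f = M.det := by
  rw [← LinearMap.det_toMatrix qb]
  congr 1
  ext i j
  rw [LinearMap.toMatrix_apply, hM]

lemma det_mulLeft (a : ℍ[ℝ]) : LinearMap.det (LinearMap.mulLeft ℝ a) = normSq a ^ 2 := by
  rw [detM a _ (Matrix.of ![![a.re, -a.imI, -a.imJ, -a.imK],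
        ![a.imI, a.re, -a.imK, a.imJ],
        ![a.imJ, a.imK, a.re, -a.imI],
        ![a.imK, -a.imJ, a.imI, a.re]]) ?_]
  · simp [Matrix.det_succ_row_zero, Fin.sum_univ_succ, Fin.succAbove, Fin.castSucc, Fin.castAdd, Fin.castLE, normSq_def']
    ring
  · intro i j
    have h := fun x => qb_repr x
    fin_cases i <;> fin_cases j <;>
      simp [qb_apply, h, LinearMap.mulLeft_apply, Quaternion.ext_iff] <;> ring

lemma det_mulRight (b : ℍ[ℝ]) : LinearMap.det (LinearMap.mulRight ℝ b) = normSq b ^ 2 := by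
  rw [detM b _ (Matrix.of ![![b.re, -b.imI, -b.imJ, -b.imK],
        ![b.imI, b.re, b.imK, -b.imJ],
        ![b.imJ, -b.imK, b.re, b.imI],
        ![b.imK, b.imJ, -b.imI, b.re]]) ?_]
  · simp [Matrix.det_succ_row_zero, Fin.sum_univ_succ, Fin.succAbove,
      Fin.castSucc, Fin.castAdd, Fin.castLE, normSq_def']
    ring
  · intro i j
    have h := fun x => qb_repr x
    fin_cases i <;> fin_cases j <;>
      simp [qb_apply, h, LinearMap.mulRight_apply, Quaternion.ext_iff] <;> ring

noncomputable def qstarL : ℍ[ℝ] →ₗ[ℝ] ℍ[ℝ] where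
  toFun := star
  map_add' := star_add
  map_smul' r x := by simp [Quaternion.star_smul]

lemma det_qstarL : LinearMap.det qstarL = -1 := by
  rw [detM 0 _ (Matrix.of ![![1,0,0,0], ![0,-1,0,0], ![0,0,-1,0], ![0,0,0,-1]]) ?_]
  · simp [Matrix.det_succ_row_zero, Fin.sum_univ_succ, Fin.succAbove,
      Fin.castSucc, Fin.castAdd, Fin.castLE]
  · intro i j
    have h := fun x => qb_repr x
    fin_cases i <;> fin_cases j <;>
      simp [qb_apply, h, qstarL, Quaternion.ext_iff, QuaternionAlgebra.star_mk, Matrix.vecHead, Matrix.vecTail]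

lemma norm_sq_eq' (a : ℍ[ℝ]) : ‖a‖ ^ 2 = normSq a := by
  rw [Quaternion.normSq_eq_norm_mul_self]; ring

lemma star_mul_self_of_unit {a : ℍ[ℝ]} (h : ‖a‖ = 1) : star a * a = 1 := by
  have h1 : normSq a = 1 := by rw [← norm_sq_eq', h]; norm_num
  rw [Quaternion.star_mul_self, h1]; simp

lemma mul_star_self_of_unit {a : ℍ[ℝ]} (h : ‖a‖ = 1) : a * star a = 1 := by
  have h1 : normSq a = 1 := by rw [← norm_sq_eq', h]; norm_num
  rw [Quaternion.self_mul_star, h1]; simp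

lemma key_identity (v x : ℍ[ℝ]) :
    v * star x * v = (2 * (v * star x).re) • v - (normSq v) • x := by
  ext <;>
    simp [Quaternion.normSq_def'] <;> ring

lemma reflection_formula (v : ℍ[ℝ]) (hv : v ≠ 0) (x : ℍ[ℝ]) :
    (Submodule.reflection (ℝ ∙ v)ᗮ) x = -(‖v‖⁻¹ • v) * star x * (‖v‖⁻¹ • v) := by
  rw [Submodule.reflection_orthogonal_apply, Submodule.reflection_singleton_apply]
  have hn : ‖v‖ ≠ 0 := norm_ne_zero_iff.mpr hv
  have hns : normSq v ≠ 0 := by rw [← norm_sq_eq']; positivity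
  have hinner : (inner ℝ v x : ℝ) = (v * star x).re := by
    exact Quaternion.inner_def v x
  rw [hinner]
  have : -(‖v‖⁻¹ • v) * star x * (‖v‖⁻¹ • v) = -((‖v‖⁻¹ * ‖v‖⁻¹) • (v * star x * v)) := by
    simp [smul_mul_assoc, mul_smul_comm, mul_smul, neg_mul]
  rw [this, key_identity]
  rw [smul_sub, smul_smul, smul_smul]
  have h2 : ‖v‖⁻¹ * ‖v‖⁻¹ * normSq v = 1 := by
    rw [← norm_sq_eq']; field_simp
  rw [h2, one_smul, neg_sub, ← Nat.cast_smul_eq_nsmul ℝ, smul_smul]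
  rw [neg_sub]
  congr 2
  push_cast
  field_simp
  rfl

noncomputable def mulBothLIE (a b : ℍ[ℝ]) (ha : ‖a‖ = 1) (hb : ‖b‖ = 1) : ℍ[ℝ] ≃ₗᵢ[ℝ] ℍ[ℝ] where
  toLinearEquiv := LinearEquiv.ofLinear
    (LinearMap.mulLeft ℝ a ∘ₗ LinearMap.mulRight ℝ b)
    (LinearMap.mulLeft ℝ (star a) ∘ₗ LinearMap.mulRight ℝ (star b))
    (by
      apply LinearMap.ext
      intro x
      simp only [LinearMap.coe_comp, Function.comp_apply, LinearMap.mulLeft_apply,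
        LinearMap.mulRight_apply, LinearMap.id_coe, id_eq]
      have h : a * (star a * (x * star b) * b) = (a * star a) * (x * (star b * b)) := by
        noncomm_ring
      rw [h, mul_star_self_of_unit ha, star_mul_self_of_unit hb, one_mul, mul_one])
    (by
      apply LinearMap.ext
      intro x
      simp only [LinearMap.coe_comp, Function.comp_apply, LinearMap.mulLeft_apply,
        LinearMap.mulRight_apply, LinearMap.id_coe, id_eq]
      have h : star a * (a * (x * b) * star b) = (star a * a) * (x * (b * star b)) := by
        noncomm_ring
      rw [h, star_mul_self_of_unit ha, mul_star_self_of_unit hb, one_mul, mul_one])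
  norm_map' x := by
    show ‖a * (x * b)‖ = ‖x‖
    rw [norm_mul, norm_mul, ha, hb, one_mul, mul_one]

lemma mulBothLIE_apply (a b : ℍ[ℝ]) (ha : ‖a‖ = 1) (hb : ‖b‖ = 1) (x : ℍ[ℝ]) :
    mulBothLIE a b ha hb x = a * x * b := (mul_assoc a x b).symm

lemma det_mulBothLIE (a b : ℍ[ℝ]) (ha : ‖a‖ = 1) (hb : ‖b‖ = 1) :
    LinearMap.det ((mulBothLIE a b ha hb).toLinearEquiv : ℍ[ℝ] →ₗ[ℝ] ℍ[ℝ]) = 1 := by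
  have h : ((mulBothLIE a b ha hb).toLinearEquiv : ℍ[ℝ] →ₗ[ℝ] ℍ[ℝ])
      = LinearMap.mulLeft ℝ a ∘ₗ LinearMap.mulRight ℝ b := rfl
  have hna : normSq a = 1 := by rw [← norm_sq_eq', ha]; norm_num
  have hnb : normSq b = 1 := by rw [← norm_sq_eq', hb]; norm_num
  rw [h, LinearMap.det_comp, det_mulLeft, det_mulRight, hna, hnb]
  norm_num

lemma norm_sphere_coe (p : sphere (0 : ℍ[ℝ]) 1) : ‖(p : ℍ[ℝ])‖ = 1 :=
  mem_sphere_zero_iff_norm.mp p.2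

noncomputable def phi : (sphere (0 : ℍ[ℝ]) 1 × sphere (0 : ℍ[ℝ]) 1) →* SO4 where
  toFun pq := ⟨mulBothLIE pq.1 (star (pq.2 : ℍ[ℝ])) (norm_sphere_coe pq.1)
      (by rw [norm_star]; exact norm_sphere_coe pq.2),
    det_mulBothLIE _ _ _ _⟩
  map_one' := by
    apply Subtype.ext
    apply LinearIsometryEquiv.ext
    intro x
    show ((1 : sphere (0:ℍ[ℝ]) 1) : ℍ[ℝ]) * (x * star ((1 : sphere (0:ℍ[ℝ]) 1) : ℍ[ℝ])) = x
    rw [unitSphere.coe_one]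
    simp
  map_mul' pq rs := by
    apply Subtype.ext
    apply LinearIsometryEquiv.ext
    intro x
    show ((pq.1 * rs.1 : sphere (0:ℍ[ℝ]) 1) : ℍ[ℝ]) *
        (x * star ((pq.2 * rs.2 : sphere (0:ℍ[ℝ]) 1) : ℍ[ℝ])) =
      (pq.1 : ℍ[ℝ]) * (((rs.1 : ℍ[ℝ]) * (x * star (rs.2 : ℍ[ℝ]))) * star (pq.2 : ℍ[ℝ]))
    rw [unitSphere.coe_mul, unitSphere.coe_mul, star_mul]
    noncomm_ring

lemma phi_apply_eq (pq : sphere (0 : ℍ[ℝ]) 1 × sphere (0 : ℍ[ℝ]) 1) (x : ℍ[ℝ]) :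
    ((phi pq : SO4) : ℍ[ℝ] ≃ₗᵢ[ℝ] ℍ[ℝ]) x = (pq.1 : ℍ[ℝ]) * x * star (pq.2 : ℍ[ℝ]) :=
  mulBothLIE_apply _ _ (norm_sphere_coe pq.1)
    (by rw [norm_star]; exact norm_sphere_coe pq.2) x

lemma phi_ker : MonoidHom.ker phi = Subgroup.zpowers
    ((negOneSp1, negOneSp1) : sphere (0 : ℍ[ℝ]) 1 × sphere (0 : ℍ[ℝ]) 1) := by
  apply le_antisymm
  · rintro ⟨p, q⟩ hpq
    rw [MonoidHom.mem_ker] at hpq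
    have h' : ∀ x : ℍ[ℝ], (p : ℍ[ℝ]) * x * star (q : ℍ[ℝ]) = x := by
      intro x
      rw [← phi_apply_eq (p, q) x, hpq]
      rfl
    set P : ℍ[ℝ] := (p : ℍ[ℝ]) with hP
    set r : ℍ[ℝ] := star (q : ℍ[ℝ]) with hr
    have hP1 : ‖P‖ = 1 := norm_sphere_coe p
    have hP0 : P ≠ 0 := by intro h; rw [h] at hP1; simp at hP1
    have hpr : P * r = 1 := by simpa using h' 1
    have hrp : r * P = 1 := by
      have : r = P⁻¹ := (inv_eq_of_mul_eq_one_right hpr).symm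
      rw [this, inv_mul_cancel₀ hP0]
    have hcomm : ∀ x : ℍ[ℝ], P * x = x * P := by
      intro x
      calc P * x = P * (x * (r * P)) := by rw [hrp, mul_one]
        _ = (P * x * r) * P := by noncomm_ring
        _ = x * P := by rw [h' x]
    have hi := hcomm (qmk 0 1 0 0)
    have hj := hcomm (qmk 0 0 1 0)
    rw [Quaternion.ext_iff] at hi hj
    simp only [Quaternion.re_mul, Quaternion.imI_mul, Quaternion.imJ_mul, Quaternion.imK_mul] at hi hj
    have hK : P.imK = 0 := by
      have := hi.2.2.1
      simp at this
      linarith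
    have hJ : P.imJ = 0 := by
      have := hi.2.2.2
      simp at this
      linarith
    have hI : P.imI = 0 := by
      have := hj.2.2.2
      simp at this
      linarith
    have hre : P.re = 1 ∨ P.re = -1 := by
      have h2 : normSq P = 1 := by rw [← norm_sq_eq', hP1]; norm_num
      rw [Quaternion.normSq_def', hI, hJ, hK] at h2
      have h3 : (P.re - 1) * (P.re + 1) = 0 := by ring_nf; nlinarith
      rcases mul_eq_zero.mp h3 with h | h
      · left; linarith
      · right; linarith
    have hPval : P = 1 ∨ P = -1 := by
      rcases hre with h | h
      · left; ext <;> simp [h, hI, hJ, hK]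
      · right; ext <;> simp [h, hI, hJ, hK]
    rcases hPval with h | h
    · have hr1 : r = 1 := by rw [h, one_mul] at hpr; exact hpr
      have hq1 : (q : ℍ[ℝ]) = 1 := by
        have h4 := congrArg star hr1
        rw [hr, star_star] at h4
        simpa using h4
      have hp1 : p = 1 := Subtype.ext (by rw [unitSphere.coe_one]; exact h)
      have hq1' : q = 1 := Subtype.ext (by rw [unitSphere.coe_one]; exact hq1)
      rw [hp1, hq1']
      exact Subgroup.one_mem _
    · have hr1 : r = -1 := by
        rw [h, neg_one_mul] at hpr
        exact neg_eq_iff_eq_neg.mp hpr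
      have hq1 : (q : ℍ[ℝ]) = -1 := by
        have h4 := congrArg star hr1
        rw [hr, star_star] at h4
        simpa using h4
      have hp1 : p = negOneSp1 := Subtype.ext (by rw [show ((negOneSp1 : sphere (0:ℍ[ℝ]) 1) : ℍ[ℝ]) = -1 from coe_neg_sphere 1]; exact h)
      have hq1' : q = negOneSp1 := Subtype.ext (by rw [show ((negOneSp1 : sphere (0:ℍ[ℝ]) 1) : ℍ[ℝ]) = -1 from coe_neg_sphere 1]; exact hq1)
      rw [hp1, hq1']
      exact Subgroup.mem_zpowers _
  · rw [Subgroup.zpowers_le]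
    rw [MonoidHom.mem_ker]
    apply Subtype.ext
    apply LinearIsometryEquiv.ext
    intro x
    rw [phi_apply_eq]
    show ((negOneSp1 : sphere (0:ℍ[ℝ]) 1) : ℍ[ℝ]) * x * star ((negOneSp1 : sphere (0:ℍ[ℝ]) 1) : ℍ[ℝ]) = x
    have : ((negOneSp1 : sphere (0:ℍ[ℝ]) 1) : ℍ[ℝ]) = -1 := rfl
    rw [this]
    simp

lemma refl_PQ (v : ℍ[ℝ]) :
    (∃ a b : ℍ[ℝ], ‖a‖ = 1 ∧ ‖b‖ = 1 ∧ ∀ x, (Submodule.reflection (ℝ ∙ v)ᗮ) x = a * x * b) ∨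
    (∃ a b : ℍ[ℝ], ‖a‖ = 1 ∧ ‖b‖ = 1 ∧ ∀ x, (Submodule.reflection (ℝ ∙ v)ᗮ) x = a * star x * b) := by
  by_cases hv : v = 0
  · left
    refine ⟨1, 1, norm_one, norm_one, fun x => ?_⟩
    rw [one_mul, mul_one, hv]
    apply Submodule.reflection_mem_subspace_eq_self
    refine (Submodule.mem_orthogonal _ _).mpr fun u hu => ?_
    rw [Submodule.span_zero_singleton] at hu
    rw [(Submodule.mem_bot ℝ).mp hu]
    exact inner_zero_left x
  · right
    have hu : ‖‖v‖⁻¹ • v‖ = 1 := by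
      rw [norm_smul, norm_inv, norm_norm, inv_mul_cancel₀ (norm_ne_zero_iff.mpr hv)]
    exact ⟨-(‖v‖⁻¹ • v), ‖v‖⁻¹ • v, by rw [norm_neg]; exact hu, hu,
      fun x => reflection_formula v hv x⟩

lemma iso_PQ (f : ℍ[ℝ] ≃ₗᵢ[ℝ] ℍ[ℝ]) :
    (∃ a b : ℍ[ℝ], ‖a‖ = 1 ∧ ‖b‖ = 1 ∧ ∀ x, f x = a * x * b) ∨
    (∃ a b : ℍ[ℝ], ‖a‖ = 1 ∧ ‖b‖ = 1 ∧ ∀ x, f x = a * star x * b) := by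
  have hmem : f ∈ Subgroup.closure (Set.range fun v : ℍ[ℝ] => Submodule.reflection (ℝ ∙ v)ᗮ) := by
    rw [LinearIsometryEquiv.reflections_generate]
    trivial
  induction hmem using Subgroup.closure_induction with
  | mem g hg =>
    obtain ⟨v, rfl⟩ := hg
    exact refl_PQ v
  | one =>
    left
    exact ⟨1, 1, norm_one, norm_one, fun x => by rw [one_mul, mul_one]; rfl⟩
  | mul g h _ _ hg hh =>
    have hgh : ∀ x, (g * h) x = g (h x) := fun x => rfl
    rcases hg with ⟨a, b, ha, hb, hab⟩ | ⟨a, b, ha, hb, hab⟩ <;>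
      rcases hh with ⟨c, d, hc, hd, hcd⟩ | ⟨c, d, hc, hd, hcd⟩
    · left
      refine ⟨a * c, d * b, by rw [norm_mul, ha, hc, one_mul],
        by rw [norm_mul, hd, hb, one_mul], fun x => ?_⟩
      rw [hgh, hcd, hab]; noncomm_ring
    · right
      refine ⟨a * c, d * b, by rw [norm_mul, ha, hc, one_mul],
        by rw [norm_mul, hd, hb, one_mul], fun x => ?_⟩
      rw [hgh, hcd, hab]; noncomm_ring
    · right
      refine ⟨a * star d, star c * b, by rw [norm_mul, ha, Quaternion.norm_star, hd, one_mul],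
        by rw [norm_mul, Quaternion.norm_star, hc, hb, one_mul], fun x => ?_⟩
      rw [hgh, hcd, hab, star_mul, star_mul]; noncomm_ring
    · left
      refine ⟨a * star d, star c * b, by rw [norm_mul, ha, Quaternion.norm_star, hd, one_mul],
        by rw [norm_mul, Quaternion.norm_star, hc, hb, one_mul], fun x => ?_⟩
      rw [hgh, hcd, hab, star_mul, star_mul, star_star]; noncomm_ring
  | inv g _ hg =>
    have hinv : ∀ x, g ((g⁻¹ : ℍ[ℝ] ≃ₗᵢ[ℝ] ℍ[ℝ]) x) = x := fun x => g.apply_symm_apply x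
    rcases hg with ⟨a, b, ha, hb, hab⟩ | ⟨a, b, ha, hb, hab⟩
    · left
      refine ⟨star a, star b, by rw [Quaternion.norm_star, ha], by rw [Quaternion.norm_star, hb], fun x => ?_⟩
      apply g.injective
      rw [hinv, hab]
      have h1 : a * (star a * x * star b) * b = (a * star a) * x * (star b * b) := by noncomm_ring
      rw [h1, mul_star_self_of_unit ha, star_mul_self_of_unit hb, one_mul, mul_one]
    · right
      refine ⟨b, a, hb, ha, fun x => ?_⟩
      apply g.injective
      rw [hinv, hab]
      rw [star_mul, star_mul, star_star]
      have h1 : a * (star a * (x * star b)) * b = (a * star a) * x * (star b * b) := by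
        noncomm_ring
      rw [h1, mul_star_self_of_unit ha, star_mul_self_of_unit hb, one_mul, mul_one]

lemma phi_surj : Function.Surjective phi := by
  rintro ⟨f, hf⟩
  rcases iso_PQ f with ⟨a, b, ha, hb, hab⟩ | ⟨a, b, ha, hb, hab⟩
  · refine ⟨(⟨a, mem_sphere_zero_iff_norm.mpr ha⟩, ⟨star b, mem_sphere_zero_iff_norm.mpr (by rw [norm_star]; exact hb)⟩), ?_⟩
    apply Subtype.ext
    apply LinearIsometryEquiv.ext
    intro x
    rw [show ((phi (⟨a, _⟩, ⟨star b, _⟩) : SO4) : ℍ[ℝ] ≃ₗᵢ[ℝ] ℍ[ℝ]) x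
        = a * x * star (star b) from phi_apply_eq _ x, star_star, hab x]
  · exfalso
    have h1 : (f.toLinearEquiv : ℍ[ℝ] →ₗ[ℝ] ℍ[ℝ])
        = LinearMap.mulLeft ℝ a ∘ₗ LinearMap.mulRight ℝ b ∘ₗ qstarL := by
      apply LinearMap.ext
      intro x
      simpa [qstarL, mul_assoc] using hab x
    have hna : normSq a = 1 := by rw [← norm_sq_eq', ha]; norm_num
    have hnb : normSq b = 1 := by rw [← norm_sq_eq', hb]; norm_num
    have h2 : LinearMap.det (f.toLinearEquiv : ℍ[ℝ] →ₗ[ℝ] ℍ[ℝ]) = 1 := hf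
    rw [h1, LinearMap.det_comp, LinearMap.det_comp, det_mulLeft, det_mulRight, det_qstarL,
      hna, hnb] at h2
    norm_num at h2

/-- `SO(4)` is isomorphic to `(Sp(1) × Sp(1)) / ⟨(-1, -1)⟩`, via the map
induced by `(p, q) ↦ (x ↦ p * x * q⁻¹)`. -/
theorem so4_iso_quotient :
    ∃ e : ((sphere (0 : ℍ[ℝ]) 1 × sphere (0 : ℍ[ℝ]) 1) ⧸
        Subgroup.zpowers ((negOneSp1, negOneSp1) :
          sphere (0 : ℍ[ℝ]) 1 × sphere (0 : ℍ[ℝ]) 1)) ≃* SO4,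
      ∀ (p q : sphere (0 : ℍ[ℝ]) 1) (x : ℍ[ℝ]),
        ((e (QuotientGroup.mk (p, q)) : SO4) : ℍ[ℝ] ≃ₗᵢ[ℝ] ℍ[ℝ]) x
          = (p : ℍ[ℝ]) * x * (q : ℍ[ℝ])⁻¹ := by
  refine ⟨(QuotientGroup.quotientMulEquivOfEq phi_ker.symm).trans
    (QuotientGroup.quotientKerEquivOfSurjective phi phi_surj), ?_⟩
  intro p q x
  rw [MulEquiv.trans_apply, QuotientGroup.quotientMulEquivOfEq_mk]
  have h1 : (QuotientGroup.quotientKerEquivOfSurjective phi phi_surj)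
      (QuotientGroup.mk (p, q)) = phi (p, q) := rfl
  rw [h1, phi_apply_eq]
  have h2 : star (q : ℍ[ℝ]) = (q : ℍ[ℝ])⁻¹ :=
    inv_eq_of_mul_eq_one_right (mul_star_self_of_unit (norm_sphere_coe q)) |>.symm
  rw [h2]
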